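/- arXiv:2101.10592 — 8 statements merged into one kernel-verified Lean document; each statement's English description precedes it below -/
import Mathlib

section
/- For a bounded operator a on ℓ²(X), the following are equivalent: (1) a·k ∈ K(𝒳) and k·a ∈ K(𝒳) for every k ∈ K(𝒳) (i.e. a is a multiplier of K(𝒳) inside B(ℓ²(X))); (2) the commutator a∘M_f − M_f∘a belongs to K(𝒳) for every f ∈ c0(𝒳). -/
open scoped ENNReal

/-- A subset `A ⊆ X` is *small relative to `𝒳`* if it is contained in some member of `𝒳`. -/
def SmallRel {X : Type*} (𝒳 : Set (Set X)) (A : Set X) : Prop :=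
  ∃ E ∈ 𝒳, A ⊆ E

/-- `c0alg 𝒳` inside `ℓ∞(X)`. -/
def c0alg {X : Type*} (𝒳 : Set (Set X)) : Set (lp (fun _ : X => ℂ) ∞) :=
  {f | SmallRel 𝒳 {x | f x ≠ 0}}

/-- `c0 𝒳` is the norm closure of `c0alg 𝒳` in `ℓ∞(X)`. -/
def c0Rel {X : Type*} (𝒳 : Set (Set X)) : Set (lp (fun _ : X => ℂ) ∞) :=
  closure (c0alg 𝒳)

/-- `T` is the multiplication operator on `ℓ²(X)` by the bounded function `f`. -/
def IsMulOp {X : Type*} (f : lp (fun _ : X => ℂ) ∞)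
    (T : lp (fun _ : X => ℂ) 2 →L[ℂ] lp (fun _ : X => ℂ) 2) : Prop :=
  ∀ (ξ : lp (fun _ : X => ℂ) 2) (x : X), T ξ x = f x * ξ x

/-- `K(𝒳)`: the norm closure of the set of finite sums of operators `M_f ∘ A ∘ M_g`
with `f, g ∈ c0(𝒳)` and `A` a bounded operator on `ℓ²(X)`. -/
def KRel {X : Type*} (𝒳 : Set (Set X)) :
    Set (lp (fun _ : X => ℂ) 2 →L[ℂ] lp (fun _ : X => ℂ) 2) :=
  closure (AddSubmonoid.closure
    {T | ∃ f ∈ c0Rel 𝒳, ∃ g ∈ c0Rel 𝒳,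
      ∃ F G A : lp (fun _ : X => ℂ) 2 →L[ℂ] lp (fun _ : X => ℂ) 2,
        IsMulOp f F ∧ IsMulOp g G ∧ T = F.comp (A.comp G)} :
    Set (lp (fun _ : X => ℂ) 2 →L[ℂ] lp (fun _ : X => ℂ) 2))

/-!
For `f ∈ c0(𝒳)` the operator `M_f` lies in `K(𝒳)`: if `supp f ⊆ E ∈ 𝒳` then
`M_f = M_{1_E} ∘ id ∘ M_f`, and `f ↦ M_f` is continuous. Hence a multiplier `a` has
`a M_f - M_f a ∈ K(𝒳)`. Conversely, `K(𝒳)` is a closed additive group with `K B K ⊆ K` for every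
bounded `B`, so it suffices to treat generators `M_f A M_g`, and there
`a M_f A M_g = [a, M_f] A M_g + M_f (a A) M_g` and `M_f A M_g a = M_f (A a) M_g - M_f A [a, M_g]`.
-/

open ContinuousLinearMap

section MultiplicationOperator

variable {X : Type*} {p : ℝ≥0∞}

theorem norm_mul_apply_le (f : lp (fun _ : X => ℂ) ∞) (ξ : X → ℂ) (x : X) :
    ‖f x * ξ x‖ ≤ ‖((‖f‖ : ℂ) • ξ) x‖ := by
  rw [Pi.smul_apply, norm_mul, norm_smul, Complex.norm_real, norm_norm]
  exact mul_le_mul_of_nonneg_right (lp.norm_apply_le_norm ENNReal.top_ne_zero f x) (norm_nonneg _)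

theorem memℓp_mul (f : lp (fun _ : X => ℂ) ∞) (ξ : lp (fun _ : X => ℂ) p) :
    Memℓp (fun x => f x * ξ x) p :=
  ((lp.memℓp ξ).const_smul (‖f‖ : ℂ)).mono' (norm_mul_apply_le f ξ)

noncomputable def mulLp (f : lp (fun _ : X => ℂ) ∞) (ξ : lp (fun _ : X => ℂ) p) :
    lp (fun _ : X => ℂ) p :=
  ⟨fun x => f x * ξ x, memℓp_mul f ξ⟩

theorem norm_mulLp_le [Fact (1 ≤ p)] (f : lp (fun _ : X => ℂ) ∞) (ξ : lp (fun _ : X => ℂ) p) :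
    ‖mulLp f ξ‖ ≤ ‖f‖ * ‖ξ‖ := by
  have hp : p ≠ 0 := (zero_lt_one.trans_le Fact.out).ne'
  calc ‖mulLp f ξ‖ ≤ ‖(‖f‖ : ℂ) • ξ‖ := lp.norm_mono hp (norm_mul_apply_le f ξ)
    _ = ‖f‖ * ‖ξ‖ := by rw [lp.norm_const_smul hp, Complex.norm_real, norm_norm]

variable [Fact (1 ≤ p)]

noncomputable def mulOp :
    lp (fun _ : X => ℂ) ∞ →L[ℂ] lp (fun _ : X => ℂ) p →L[ℂ] lp (fun _ : X => ℂ) p :=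
  LinearMap.mkContinuous₂
    (LinearMap.mk₂ ℂ mulLp
      (fun _ _ _ => lp.ext (funext fun _ => add_mul _ _ _))
      (fun _ _ _ => lp.ext (funext fun _ => mul_assoc _ _ _))
      (fun _ _ _ => lp.ext (funext fun _ => mul_add _ _ _))
      (fun _ _ _ => lp.ext (funext fun _ => mul_left_comm _ _ _)))
    1 fun f ξ => by simpa using norm_mulLp_le f ξ

theorem mulOp_apply_apply (f : lp (fun _ : X => ℂ) ∞) (ξ : lp (fun _ : X => ℂ) p) (x : X) :
    mulOp f ξ x = f x * ξ x := rfl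

end MultiplicationOperator

theorem IsMulOp.eq_mulOp {X : Type*} {f : lp (fun _ : X => ℂ) ∞}
    {F : lp (fun _ : X => ℂ) 2 →L[ℂ] lp (fun _ : X => ℂ) 2} (hF : IsMulOp f F) :
    F = mulOp f :=
  ext fun ξ => lp.ext (funext (hF ξ))

theorem isMulOp_mulOp {X : Type*} (f : lp (fun _ : X => ℂ) ∞) :
    IsMulOp f (mulOp f) := fun _ _ => rfl

noncomputable def indicatorOne {X : Type*} (E : Set X) : lp (fun _ : X => ℂ) ∞ :=
  ⟨E.indicator 1, one_memℓp_infty.mono' fun _ => norm_indicator_le_norm_self _ _⟩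

theorem indicatorOne_mem_c0Rel {X : Type*} {𝒳 : Set (Set X)} {E : Set X} (hE : E ∈ 𝒳) :
    indicatorOne E ∈ c0Rel 𝒳 :=
  subset_closure ⟨E, hE, fun _ hx => by_contra fun h => hx (Set.indicator_of_notMem h 1)⟩

section KRel

variable {X : Type*} {𝒳 : Set (Set X)}

theorem comp_comp_mem_KRel_of_isMulOp {f g : lp (fun _ : X => ℂ) ∞}
    {F G : lp (fun _ : X => ℂ) 2 →L[ℂ] lp (fun _ : X => ℂ) 2} (hf : f ∈ c0Rel 𝒳) (hF : IsMulOp f F)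
    (hg : g ∈ c0Rel 𝒳) (hG : IsMulOp g G) (A : lp (fun _ : X => ℂ) 2 →L[ℂ] lp (fun _ : X => ℂ) 2) :
    F.comp (A.comp G) ∈ KRel 𝒳 :=
  subset_closure (AddSubmonoid.subset_closure ⟨f, hf, g, hg, F, G, A, hF, hG, rfl⟩)

theorem add_mem_KRel {k l : lp (fun _ : X => ℂ) 2 →L[ℂ] lp (fun _ : X => ℂ) 2}
    (hk : k ∈ KRel 𝒳) (hl : l ∈ KRel 𝒳) : k + l ∈ KRel 𝒳 :=
  (AddSubmonoid.closure _).topologicalClosure.add_mem hk hl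

theorem map_mem_KRel
    (L : (lp (fun _ : X => ℂ) 2 →L[ℂ] lp (fun _ : X => ℂ) 2) →L[ℂ]
      (lp (fun _ : X => ℂ) 2 →L[ℂ] lp (fun _ : X => ℂ) 2))
    (hL : ∀ f ∈ c0Rel 𝒳, ∀ g ∈ c0Rel 𝒳, ∀ F G A : lp (fun _ : X => ℂ) 2 →L[ℂ] lp (fun _ : X => ℂ) 2,
      IsMulOp f F → IsMulOp g G → L (F.comp (A.comp G)) ∈ KRel 𝒳)
    {k : lp (fun _ : X => ℂ) 2 →L[ℂ] lp (fun _ : X => ℂ) 2} (hk : k ∈ KRel 𝒳) :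
    L k ∈ KRel 𝒳 := by
  refine isClosed_closure.closure_subset (map_mem_closure L.continuous hk fun T hT => ?_)
  induction hT using AddSubmonoid.closure_induction with
  | mem T hT =>
    obtain ⟨f, hf, g, hg, F, G, A, hF, hG, rfl⟩ := hT
    exact hL f hf g hg F G A hF hG
  | zero => simpa using subset_closure (zero_mem _)
  | add T T' _ _ hT hT' => exact map_add L T T' ▸ add_mem_KRel hT hT'

theorem neg_mem_KRel {k : lp (fun _ : X => ℂ) 2 →L[ℂ] lp (fun _ : X => ℂ) 2} (hk : k ∈ KRel 𝒳) :
    -k ∈ KRel 𝒳 := by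
  refine map_mem_KRel (-ContinuousLinearMap.id ℂ _) (fun f hf g hg F G A hF hG => ?_) hk
  simpa using comp_comp_mem_KRel_of_isMulOp hf hF hg hG (-A)

theorem sub_mem_KRel {k l : lp (fun _ : X => ℂ) 2 →L[ℂ] lp (fun _ : X => ℂ) 2}
    (hk : k ∈ KRel 𝒳) (hl : l ∈ KRel 𝒳) : k - l ∈ KRel 𝒳 :=
  sub_eq_add_neg k l ▸ add_mem_KRel hk (neg_mem_KRel hl)

theorem comp_comp_mem_KRel {k l : lp (fun _ : X => ℂ) 2 →L[ℂ] lp (fun _ : X => ℂ) 2}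
    (hk : k ∈ KRel 𝒳) (B : lp (fun _ : X => ℂ) 2 →L[ℂ] lp (fun _ : X => ℂ) 2) (hl : l ∈ KRel 𝒳) :
    k.comp (B.comp l) ∈ KRel 𝒳 := by
  refine map_mem_KRel ((compL ℂ _ _ _).flip (B.comp l)) (fun f hf g hg F G A hF hG => ?_) hk
  refine map_mem_KRel (compL ℂ _ _ _ ((F.comp (A.comp G)).comp B))
    (fun f' hf' g' hg' F' G' A' hF' hG' => ?_) hl
  exact comp_comp_mem_KRel_of_isMulOp hf hF hg' hG' (A.comp (G.comp (B.comp (F'.comp A'))))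

theorem mulOp_mem_KRel_of_mem_c0alg {f : lp (fun _ : X => ℂ) ∞} (hf : f ∈ c0alg 𝒳) :
    mulOp f ∈ KRel 𝒳 := by
  obtain ⟨E, hE, hfE⟩ := hf
  have hmul : mulOp (p := 2) f
      = (mulOp (indicatorOne E)).comp ((ContinuousLinearMap.id ℂ _).comp (mulOp f)) := by
    ext ξ x
    by_cases hx : x ∈ E
    · simp [mulOp_apply_apply, indicatorOne, hx]
    · have hfx : f x = 0 := by_contra fun h => hx (hfE h)
      simp [mulOp_apply_apply, indicatorOne, hx, hfx]
  rw [hmul]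
  exact comp_comp_mem_KRel_of_isMulOp (indicatorOne_mem_c0Rel hE) (isMulOp_mulOp _)
    (subset_closure ⟨E, hE, hfE⟩) (isMulOp_mulOp f) _

theorem isMulOp_mem_KRel {f : lp (fun _ : X => ℂ) ∞}
    {F : lp (fun _ : X => ℂ) 2 →L[ℂ] lp (fun _ : X => ℂ) 2} (hf : f ∈ c0Rel 𝒳) (hF : IsMulOp f F) :
    F ∈ KRel 𝒳 :=
  hF.eq_mulOp ▸ isClosed_closure.closure_subset
    (map_mem_closure mulOp.continuous hf fun _ hg => mulOp_mem_KRel_of_mem_c0alg hg)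

end KRel

theorem mem_multiplier_iff_commutator_general {X : Type*} (𝒳 : Set (Set X))
    (a : lp (fun _ : X => ℂ) 2 →L[ℂ] lp (fun _ : X => ℂ) 2) :
    (∀ k ∈ KRel 𝒳, a.comp k ∈ KRel 𝒳 ∧ k.comp a ∈ KRel 𝒳) ↔
    (∀ f ∈ c0Rel 𝒳, ∀ F : lp (fun _ : X => ℂ) 2 →L[ℂ] lp (fun _ : X => ℂ) 2,
      IsMulOp f F → a.comp F - F.comp a ∈ KRel 𝒳) := by
  refine ⟨fun h f hf F hF => ?_, fun h k hk => ⟨?_, ?_⟩⟩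
  · obtain ⟨haF, hFa⟩ := h F (isMulOp_mem_KRel hf hF)
    exact sub_mem_KRel haF hFa
  · refine map_mem_KRel (compL ℂ _ _ _ a) (fun f hf g hg F G A hF hG => ?_) hk
    have hsplit : a.comp (F.comp (A.comp G))
        = (a.comp F - F.comp a).comp (A.comp G) + F.comp ((a.comp A).comp G) := by
      simp only [sub_comp, comp_assoc]
      abel
    rw [compL_apply, hsplit]
    exact add_mem_KRel (comp_comp_mem_KRel (h f hf F hF) A (isMulOp_mem_KRel hg hG))
      (comp_comp_mem_KRel_of_isMulOp hf hF hg hG _)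
  · refine map_mem_KRel ((compL ℂ _ _ _).flip a) (fun f hf g hg F G A hF hG => ?_) hk
    have hsplit : (F.comp (A.comp G)).comp a
        = F.comp ((A.comp a).comp G) + F.comp ((-A).comp (a.comp G - G.comp a)) := by
      simp only [comp_sub, neg_comp, comp_neg, comp_assoc]
      abel
    rw [flip_apply, compL_apply, hsplit]
    exact add_mem_KRel (comp_comp_mem_KRel_of_isMulOp hf hF hg hG _)
      (comp_comp_mem_KRel (isMulOp_mem_KRel hf hF) (-A) (h g hg G hG))

/-- A bounded operator `a` on `ℓ²(X)` is a multiplier of `K(𝒳)` iff it commutes with all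
multiplication operators `M_f`, `f ∈ c0(𝒳)`, modulo `K(𝒳)`. -/
theorem mem_multiplier_iff_commutator {X : Type*} (𝒳 : Set (Set X))
    (hU : ∀ E ∈ 𝒳, ∀ F ∈ 𝒳, E ∪ F ∈ 𝒳)
    (a : lp (fun _ : X => ℂ) 2 →L[ℂ] lp (fun _ : X => ℂ) 2) :
    (∀ k ∈ KRel 𝒳, a.comp k ∈ KRel 𝒳 ∧ k.comp a ∈ KRel 𝒳) ↔
    (∀ f ∈ c0Rel 𝒳, ∀ F : lp (fun _ : X => ℂ) 2 →L[ℂ] lp (fun _ : X => ℂ) 2,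
      IsMulOp f F → a.comp F - F.comp a ∈ KRel 𝒳) :=
  mem_multiplier_iff_commutator_general 𝒳 a
end

section
/- Let Γ be a countable group acting on a set X such that every point stabilizer is finite and the action has only finitely many orbits. Then there exist functions |·|_X : X → [0,∞) and ℓ : Γ → [0,∞) such that: ℓ(1) = 0; ℓ(g⁻¹) = ℓ(g) for all g; ℓ(gh) ≤ ℓ(g) + ℓ(h) for all g, h; the set {g ∈ Γ : ℓ(g) ≤ R} is finite for every R > 0; |g·x|_X ≤ ℓ(g) + |x|_X for all g ∈ Γ and x ∈ X; and the set {x ∈ X : |x|_X ≤ R} is finite for every R > 0. -/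
/-!
Enumerate `Γ` injectively by `e : Γ → ℕ` and give each letter `s` the weight
`e s + e s⁻¹ + 1`. The least total weight of a word representing `g` is a symmetric
subadditive length, and its balls are finite: a word of weight `≤ n` has at most `n` letters,
each from the finite set of letters of weight `≤ n`. On `X`, fix a base point in every orbit
and let `|x|` be the least length of a group element carrying the base point of its orbit
to `x`. Since `g * h` carries the base point to `g • x` whenever `h` carries it to `x`, this
satisfies `|g • x| ≤ ℓ g + |x|`, and a ball of `X` lies in the finitely many translates of
base points by a ball of `Γ`.
-/

open MulAction

lemma Set.Finite.setOf_list_length_le {α : Type*} {T : Set α} (hT : T.Finite) (n : ℕ) :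
    {L : List α | L.length ≤ n ∧ ∀ x ∈ L, x ∈ T}.Finite := by
  have : Finite T := hT.to_subtype
  refine ((List.finite_length_le T n).image (List.map Subtype.val)).subset ?_
  rintro L ⟨hlen, hmem⟩
  lift L to List T using hmem
  exact ⟨L, by simpa using hlen, rfl⟩

lemma finite_setOf_natCast_le {α : Type*} {f : α → ℕ} (hf : ∀ n, {a | f a ≤ n}.Finite) (R : ℝ) :
    {a | (f a : ℝ) ≤ R}.Finite :=
  (hf ⌊R⌋₊).subset fun _ ha => Nat.le_floor ha

section WordLength

variable {Γ : Type*} [Group Γ] (w : Γ → ℕ)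

noncomputable def weightedWordLength (g : Γ) : ℕ :=
  sInf {n | ∃ L : List Γ, L.prod = g ∧ (L.map w).sum = n}

lemma weightedWordLength_le (L : List Γ) : weightedWordLength w L.prod ≤ (L.map w).sum :=
  Nat.sInf_le ⟨L, rfl, rfl⟩

lemma exists_list_weightedWordLength (g : Γ) :
    ∃ L : List Γ, L.prod = g ∧ (L.map w).sum = weightedWordLength w g :=
  Nat.sInf_mem (s := {n | ∃ L : List Γ, L.prod = g ∧ (L.map w).sum = n}) ⟨w g, [g], by simp⟩

@[simp]
lemma weightedWordLength_one : weightedWordLength w (1 : Γ) = 0 :=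
  Nat.le_zero.1 (weightedWordLength_le w [])

lemma weightedWordLength_mul_le (g h : Γ) :
    weightedWordLength w (g * h) ≤ weightedWordLength w g + weightedWordLength w h := by
  obtain ⟨L, rfl, hL⟩ := exists_list_weightedWordLength w g
  obtain ⟨M, rfl, hM⟩ := exists_list_weightedWordLength w h
  simpa [← hL, ← hM] using weightedWordLength_le w (L ++ M)

variable {w}

lemma weightedWordLength_inv_le (hw : ∀ s, w s⁻¹ = w s) (g : Γ) :
    weightedWordLength w g⁻¹ ≤ weightedWordLength w g := by
  obtain ⟨L, rfl, hL⟩ := exists_list_weightedWordLength w g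
  rw [List.prod_inv_reverse, ← hL]
  simpa [Function.comp_def, hw] using weightedWordLength_le w (L.map (·⁻¹)).reverse

lemma weightedWordLength_inv (hw : ∀ s, w s⁻¹ = w s) (g : Γ) :
    weightedWordLength w g⁻¹ = weightedWordLength w g :=
  (weightedWordLength_inv_le hw g).antisymm (by simpa using weightedWordLength_inv_le hw g⁻¹)

lemma finite_setOf_weightedWordLength_le (hw : ∀ s, 1 ≤ w s)
    (hfin : ∀ n, {s | w s ≤ n}.Finite) (n : ℕ) :
    {g | weightedWordLength w g ≤ n}.Finite := by
  refine (((hfin n).setOf_list_length_le n).image List.prod).subset ?_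
  intro g hg
  obtain ⟨L, rfl, hL⟩ := exists_list_weightedWordLength w g
  have hsum : (L.map w).sum ≤ n := hL ▸ hg
  refine ⟨L, ⟨?_, fun s hs => ?_⟩, rfl⟩
  · simpa using (List.length_le_sum_of_one_le (L.map w) (by simpa using fun s _ => hw s)).trans hsum
  · exact (List.le_sum_of_mem (List.mem_map_of_mem hs)).trans hsum

end WordLength

lemma exists_proper_length (Γ : Type*) [Group Γ] [Countable Γ] :
    ∃ l : Γ → ℕ, l 1 = 0 ∧ (∀ g, l g⁻¹ = l g) ∧ (∀ g h, l (g * h) ≤ l g + l h) ∧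
      ∀ n, {g | l g ≤ n}.Finite := by
  obtain ⟨e, he⟩ := exists_injective_nat Γ
  set w : Γ → ℕ := fun s => e s + e s⁻¹ + 1
  have hw_inv (s : Γ) : w s⁻¹ = w s := by simp only [w, inv_inv]; ring
  have hw_fin (n : ℕ) : {s | w s ≤ n}.Finite :=
    ((Set.finite_Iic n).preimage he.injOn).subset fun s (hs : e s + e s⁻¹ + 1 ≤ n) =>
      show e s ≤ n by omega
  exact ⟨weightedWordLength w, weightedWordLength_one w, weightedWordLength_inv hw_inv,
    weightedWordLength_mul_le w,
    finite_setOf_weightedWordLength_le (fun s => Nat.le_add_left 1 _) hw_fin⟩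

section OrbitLength

variable {Γ X : Type*} [Group Γ] [MulAction Γ X] (l : Γ → ℕ)

variable (Γ) in
noncomputable def orbitBase (x : X) : X := (⟦x⟧ : orbitRel.Quotient Γ X).out

lemma orbitBase_smul (g : Γ) (x : X) : orbitBase Γ (g • x) = orbitBase Γ x := by
  simp [orbitBase]

lemma exists_smul_orbitBase (x : X) : ∃ g : Γ, g • orbitBase Γ x = x :=
  mem_orbit_symm.1 (orbitRel_apply.1 (Quotient.mk_out (s := orbitRel Γ X) x))

noncomputable def orbitLength (x : X) : ℕ :=
  sInf (l '' {g : Γ | g • orbitBase Γ x = x})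

lemma exists_smul_orbitBase_eq_orbitLength (x : X) :
    ∃ g : Γ, g • orbitBase Γ x = x ∧ l g = orbitLength l x := by
  obtain ⟨g, hg⟩ := exists_smul_orbitBase (Γ := Γ) x
  exact Nat.sInf_mem (s := l '' {g : Γ | g • orbitBase Γ x = x}) ⟨l g, g, hg, rfl⟩

variable {l}

lemma orbitLength_smul_le (hl : ∀ g h, l (g * h) ≤ l g + l h) (g : Γ) (x : X) :
    orbitLength l (g • x) ≤ l g + orbitLength l x := by
  obtain ⟨h, hh, hlh⟩ := exists_smul_orbitBase_eq_orbitLength l x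
  have hgh : (g * h) • orbitBase Γ (g • x) = g • x := by
    rw [orbitBase_smul, mul_smul, hh]
  exact (Nat.sInf_le (Set.mem_image_of_mem l hgh)).trans (hlh ▸ hl g h)

lemma finite_setOf_orbitLength_le [Finite (orbitRel.Quotient Γ X)]
    (hl : ∀ n, {g | l g ≤ n}.Finite) (n : ℕ) : {x : X | orbitLength l x ≤ n}.Finite := by
  refine (Set.finite_iUnion fun q : orbitRel.Quotient Γ X =>
    (hl n).image (· • q.out)).subset fun x hx => ?_
  obtain ⟨g, hg, hlg⟩ := exists_smul_orbitBase_eq_orbitLength l x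
  exact Set.mem_iUnion.2 ⟨⟦x⟧, g, hlg.trans_le hx, hg⟩

end OrbitLength

theorem exists_length_functions_general {Γ X : Type*} [Group Γ] [Countable Γ] [MulAction Γ X]
    (horb : Finite (MulAction.orbitRel.Quotient Γ X)) :
    ∃ (nX : X → ℝ) (l : Γ → ℝ),
      (∀ x, 0 ≤ nX x) ∧
      (∀ g, 0 ≤ l g) ∧
      l 1 = 0 ∧
      (∀ g : Γ, l g⁻¹ = l g) ∧
      (∀ g h : Γ, l (g * h) ≤ l g + l h) ∧
      (∀ R : ℝ, 0 < R → {g : Γ | l g ≤ R}.Finite) ∧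
      (∀ (g : Γ) (x : X), nX (g • x) ≤ l g + nX x) ∧
      (∀ R : ℝ, 0 < R → {x : X | nX x ≤ R}.Finite) := by
  obtain ⟨l, hl_one, hl_inv, hl_mul, hl_fin⟩ := exists_proper_length Γ
  refine ⟨fun x => orbitLength l x, fun g => l g, fun _ => Nat.cast_nonneg _,
    fun _ => Nat.cast_nonneg _, by simp [hl_one], fun g => by simp [hl_inv],
    fun g h => by dsimp only; exact_mod_cast hl_mul g h,
    fun R _ => finite_setOf_natCast_le hl_fin R,
    fun g x => by dsimp only; exact_mod_cast orbitLength_smul_le hl_mul g x,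
    fun R _ => finite_setOf_natCast_le (finite_setOf_orbitLength_le hl_fin) R⟩

/-- For a countable group `Γ` acting on a set `X` with finite stabilizers and finitely many
orbits, there exist a function `|·|_X : X → [0,∞)` and a proper symmetric length function
`ℓ : Γ → [0,∞)` such that `|g • x|_X ≤ ℓ g + |x|_X` and all sublevel sets of `|·|_X`
are finite. -/
theorem exists_length_functions {Γ X : Type*} [Group Γ] [Countable Γ] [MulAction Γ X]
    (hstab : ∀ x : X, {g : Γ | g • x = x}.Finite)
    (horb : Finite (MulAction.orbitRel.Quotient Γ X)) :
    ∃ (nX : X → ℝ) (l : Γ → ℝ),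
      (∀ x, 0 ≤ nX x) ∧
      (∀ g, 0 ≤ l g) ∧
      l 1 = 0 ∧
      (∀ g : Γ, l g⁻¹ = l g) ∧
      (∀ g h : Γ, l (g * h) ≤ l g + l h) ∧
      (∀ R : ℝ, 0 < R → {g : Γ | l g ≤ R}.Finite) ∧
      (∀ (g : Γ) (x : X), nX (g • x) ≤ l g + nX x) ∧
      (∀ R : ℝ, 0 < R → {x : X | nX x ≤ R}.Finite) :=
  exists_length_functions_general horb
end

section
/- Let X be a type, n a natural number, and x : Fin n → X a function. Then the signed sum Σ_σ sgn(σ)·[x ∘ σ = x], taken over all permutations σ of Fin n (where [P] is 1 if P holds and 0 otherwise, and sgn is the sign of the permutation), equals 1 if x is injective and 0 otherwise. (This is the squared norm of δ_{x₁} ⊗ ⋯ ⊗ δ_{xₙ} in the anti-symmetric (q = −1) inner product.) -/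
/-- The signed sum `Σ_σ sgn(σ)·[x ∘ σ = x]` over permutations `σ` of `Fin n` equals `1` if
`x` is injective and `0` otherwise; this is the squared norm of `δ_{x₁} ⊗ ⋯ ⊗ δ_{xₙ}` in the
anti-symmetric (`q = -1`) inner product. -/
theorem signed_sum_stabilizer_eq_ite_injective {X : Type*} [DecidableEq X] (n : ℕ)
    (x : Fin n → X) :
    (∑ σ : Equiv.Perm (Fin n), (Equiv.Perm.sign σ : ℤ) * (if x ∘ ⇑σ = x then 1 else 0)) =
      (if Function.Injective x then 1 else 0) := by
  by_cases hinj : Function.Injective x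
  · rw [if_pos hinj]
    have hcond : ∀ σ : Equiv.Perm (Fin n), (x ∘ ⇑σ = x) ↔ σ = 1 := by
      intro σ
      constructor
      · intro h
        exact Equiv.ext fun k => hinj (congrFun h k)
      · rintro rfl; rfl
    rw [Finset.sum_eq_single (1 : Equiv.Perm (Fin n))]
    · simp
    · intro σ _ hσ
      rw [if_neg (fun h => hσ ((hcond σ).mp h)), mul_zero]
    · simp
  · rw [if_neg hinj]
    simp only [Function.Injective, not_forall] at hinj
    obtain ⟨i, j, hxij, hij⟩ := hinj
    set τ := Equiv.swap i j with hτ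
    have hxτ : x ∘ ⇑τ = x := by
      funext k
      simp only [Function.comp_apply, hτ, Equiv.swap_apply_def]
      split_ifs with h1 h2
      · rw [h1, hxij]
      · rw [h2, hxij]
      · rfl
    apply Finset.sum_involution (fun σ _ => σ * τ)
    · intro σ _
      have hiff : (x ∘ ⇑(σ * τ) = x) ↔ (x ∘ ⇑σ = x) := by
        constructor
        · intro h
          funext k
          have h1 := congrFun h (τ k)
          simp only [Function.comp_apply, Equiv.Perm.mul_apply, hτ,
            Equiv.swap_apply_self] at h1
          show x (σ k) = x k
          exact h1.trans (congrFun hxτ k)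
        · intro h
          have h2 : x ∘ ⇑(σ * τ) = (x ∘ ⇑σ) ∘ ⇑τ := rfl
          rw [h2, h, hxτ]
      have hsign : (Equiv.Perm.sign (σ * τ) : ℤ) = -(Equiv.Perm.sign σ : ℤ) := by
        rw [map_mul]
        simp [hτ, Equiv.Perm.sign_swap hij]
      rw [hsign]
      by_cases h : x ∘ ⇑σ = x
      · rw [if_pos h, if_pos (hiff.mpr h)]; ring
      · rw [if_neg h, if_neg (fun hh => h (hiff.mp hh))]; ring
    · intro σ _ _
      intro h
      have hτ1 : τ = 1 := mul_left_cancel (a := σ) (h.trans (mul_one σ).symm)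
      have : i = j := by
        have h3 : τ i = (1 : Equiv.Perm (Fin n)) i := by rw [hτ1]
        simpa [hτ, Equiv.swap_apply_left] using h3.symm
      exact hij this
    · intro σ _; exact Finset.mem_univ _
    · intro σ _
      simp [mul_assoc, hτ, Equiv.swap_mul_self]
end

section
/- Let X be a type, n a natural number, y : Fin n → X a function, and x ∈ X. Let k be the number of indices i with y(i) = x. Then the number of permutations σ of Fin (n+1) fixing the extended function Fin.cons x y (i.e. satisfying (Fin.cons x y) ∘ σ = Fin.cons x y) equals (k + 1) times the number of permutations τ of Fin n with y ∘ τ = y. Consequently the ratio C² of these stabilizer cardinalities satisfies 1 ≤ C² ≤ n + 1 (this is the constant C_{x,[y]} with ℓ(x)δ_{[y]} = C_{x,[y]} δ_{[(x,y)]} for creation operators on the symmetric Fock space, satisfying 1 ≤ C_{x,[y]} ≤ √(n+1)). -/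
open Finset Equiv

lemma cons_stab_iff {X : Type*} [DecidableEq X] {n : ℕ} (y : Fin n → X) (x : X)
    (p : Fin (n + 1)) (e : Equiv.Perm (Fin n)) :
    Fin.cons x y ∘ ⇑(Equiv.Perm.decomposeFin.symm (p, e)) = Fin.cons x y ↔
      ((Fin.cons x y : Fin (n + 1) → X) p = x ∧ y ∘ ⇑e = y) := by
  constructor
  · intro h
    have h0 : (Fin.cons x y : Fin (n + 1) → X) p = x := by
      have := congrFun h 0
      simpa using this
    refine ⟨h0, funext fun i => ?_⟩
    show y (e i) = y i
    have hi := congrFun h i.succ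
    simp only [Function.comp_apply, Equiv.Perm.decomposeFin_symm_apply_succ] at hi
    rcases Fin.eq_zero_or_eq_succ p with rfl | ⟨j, rfl⟩
    · simpa using hi
    · have hj : y j = x := by simpa using h0
      rcases eq_or_ne (e i) j with hej | hej
      · rw [hej, Equiv.swap_apply_right] at hi
        simp only [Fin.cons_zero, Fin.cons_succ] at hi
        rw [hej, hj]; exact hi
      · rw [Equiv.swap_apply_of_ne_of_ne (Fin.succ_ne_zero _) (by simpa using hej)] at hi
        simpa using hi
  · rintro ⟨h0, h1⟩
    funext i
    refine Fin.cases ?_ (fun i => ?_) i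
    · simpa using h0
    · simp only [Function.comp_apply, Equiv.Perm.decomposeFin_symm_apply_succ, Fin.cons_succ]
      rcases Fin.eq_zero_or_eq_succ p with rfl | ⟨j, rfl⟩
      · simpa using congrFun h1 i
      · have hj : y j = x := by simpa using h0
        rcases eq_or_ne (e i) j with hej | hej
        · rw [hej, Equiv.swap_apply_right]
          have := congrFun h1 i
          simp only [Function.comp_apply] at this
          simp [← this, hej, hj]
        · rw [Equiv.swap_apply_of_ne_of_ne (Fin.succ_ne_zero _) (by simpa using hej)]
          simpa using congrFun h1 i

/-- Let `k` be the number of indices `i` with `y i = x`. The number of permutations of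
`Fin (n+1)` fixing `Fin.cons x y` equals `(k+1)` times the number of permutations of `Fin n`
fixing `y`; consequently the ratio `C²` of the stabilizer cardinalities equals `k + 1` and
satisfies `1 ≤ C² ≤ n + 1` (so `1 ≤ C_{x,[y]} ≤ √(n+1)` for the creation operator constant). -/
theorem card_stabilizer_cons {X : Type*} [DecidableEq X] (n : ℕ) (y : Fin n → X) (x : X) :
    (Finset.univ.filter
        fun σ : Equiv.Perm (Fin (n + 1)) => Fin.cons x y ∘ ⇑σ = Fin.cons x y).card =
      ((Finset.univ.filter fun i : Fin n => y i = x).card + 1) *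
        (Finset.univ.filter fun τ : Equiv.Perm (Fin n) => y ∘ ⇑τ = y).card ∧
    1 ≤ (Finset.univ.filter fun i : Fin n => y i = x).card + 1 ∧
    (Finset.univ.filter fun i : Fin n => y i = x).card + 1 ≤ n + 1 := by
  refine ⟨?_, Nat.le_add_left 1 _, ?_⟩
  · have hcard : (Finset.univ.filter
        fun σ : Equiv.Perm (Fin (n + 1)) => Fin.cons x y ∘ ⇑σ = Fin.cons x y).card =
        ((Finset.univ ×ˢ Finset.univ).filter fun pe : Fin (n + 1) × Equiv.Perm (Fin n) =>
          (Fin.cons x y : Fin (n + 1) → X) pe.1 = x ∧ y ∘ ⇑pe.2 = y).card := by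
      apply Finset.card_equiv Equiv.Perm.decomposeFin
      intro σ
      simp only [Finset.mem_filter, Finset.mem_univ, true_and, Finset.mem_product]
      have := cons_stab_iff y x (Equiv.Perm.decomposeFin σ).1 (Equiv.Perm.decomposeFin σ).2
      rw [← this]
      simp
    have hprod : ((Finset.univ ×ˢ Finset.univ).filter
        fun pe : Fin (n + 1) × Equiv.Perm (Fin n) =>
          (Fin.cons x y : Fin (n + 1) → X) pe.1 = x ∧ y ∘ ⇑pe.2 = y) =
        (Finset.univ.filter fun p : Fin (n + 1) => (Fin.cons x y : Fin (n + 1) → X) p = x) ×ˢ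
          (Finset.univ.filter fun τ : Equiv.Perm (Fin n) => y ∘ ⇑τ = y) := by
      ext ⟨p, e⟩
      simp
    rw [hcard, hprod, Finset.card_product]
    congr 1
    have : (Finset.univ.filter fun p : Fin (n + 1) => (Fin.cons x y : Fin (n + 1) → X) p = x) =
        insert (0 : Fin (n + 1))
          ((Finset.univ.filter fun i : Fin n => y i = x).image Fin.succ) := by
      ext p
      refine Fin.cases ?_ (fun i => ?_) p <;>
        simp [Fin.succ_ne_zero, Fin.succ_inj, eq_comm (a := (0 : Fin (n+1)))]
    rw [this, Finset.card_insert_of_notMem (by simp [Fin.succ_ne_zero]),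
      Finset.card_image_of_injective _ (Fin.succ_injective n)]
  · have := Finset.card_filter_le (Finset.univ : Finset (Fin n)) (fun i => y i = x)
    simp only [Finset.card_univ, Fintype.card_fin] at this
    omega
end

section
/- Let A be a subset of 𝖸 × Γ. Then A is contained in a finite union of sets of the form sΓt with s, t ∈ 𝖸 × Γ if and only if sup_{z ∈ A} |z|_sym < ∞. -/
/-- The set `sΓt ⊆ 𝖸 ⋊ Γ` for `s, t ∈ 𝖸 ⋊ Γ`, where `𝖸 = X →₀ ℕ` is the free commutative
monoid on `X` and the product is `(a, g)(b, h) = (a + g·b, gh)`: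
`sΓt = {(s' + (σg)·t', σgτ) : g ∈ Γ}`. -/
def sGammaT {X Γ : Type*} [Group Γ] [MulAction Γ X]
    (s t : (X →₀ ℕ) × Γ) : Set ((X →₀ ℕ) × Γ) :=
  {z | ∃ g : Γ, z = (s.1 + Finsupp.mapDomain (fun y => (s.2 * g) • y) t.1, s.2 * g * t.2)}

/-- The length `|z|_sym` of `z = (a, g) ∈ 𝖸 ⋊ Γ`:
`|z|_sym = Σ_x a(x)·(1 + min{|x|_X, |g⁻¹·x|_X})`. -/
def symLen {X Γ : Type*} [Group Γ] [MulAction Γ X] (nX : X → ℝ)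
    (z : (X →₀ ℕ) × Γ) : ℝ :=
  ∑ x ∈ z.1.support, (z.1 x : ℝ) * (1 + min (nX x) (nX (z.2⁻¹ • x)))

lemma weight_nonneg {X Γ : Type*} [Group Γ] [MulAction Γ X] {nX : X → ℝ}
    (hX0 : ∀ x, 0 ≤ nX x) (h : Γ) (y : X) :
    0 ≤ (1 : ℝ) + min (nX y) (nX (h⁻¹ • y)) := by
  have : 0 ≤ min (nX y) (nX (h⁻¹ • y)) := le_min (hX0 y) (hX0 _)
  linarith

lemma symLen_eq_sum {X Γ : Type*} [Group Γ] [MulAction Γ X] (nX : X → ℝ)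
    (c : X →₀ ℕ) (h : Γ) (S : Finset X) (hS : c.support ⊆ S) :
    symLen nX (c, h) = ∑ x ∈ S, (c x : ℝ) * (1 + min (nX x) (nX (h⁻¹ • x))) := by
  refine Finset.sum_subset hS fun x _ hx => ?_
  simp [Finsupp.notMem_support_iff.mp hx]

lemma term_le_symLen {X Γ : Type*} [Group Γ] [MulAction Γ X] {nX : X → ℝ}
    (hX0 : ∀ x, 0 ≤ nX x) (z : (X →₀ ℕ) × Γ) (x : X) (hx : x ∈ z.1.support) :
    (z.1 x : ℝ) * (1 + min (nX x) (nX (z.2⁻¹ • x))) ≤ symLen nX z :=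
  Finset.single_le_sum (f := fun y => (z.1 y : ℝ) * (1 + min (nX y) (nX (z.2⁻¹ • y))))
    (fun y _ => mul_nonneg (Nat.cast_nonneg _) (weight_nonneg hX0 _ _)) hx

/-- The natural bound for `symLen` on the set `sΓt`. -/
noncomputable def stBound {X Γ : Type*} [Group Γ] [MulAction Γ X] (nX : X → ℝ)
    (p : ((X →₀ ℕ) × Γ) × ((X →₀ ℕ) × Γ)) : ℝ :=
  (∑ x ∈ p.1.1.support, (p.1.1 x : ℝ) * (1 + nX x)) +
    ∑ y ∈ p.2.1.support, (p.2.1 y : ℝ) * (1 + nX (p.2.2⁻¹ • y))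

lemma stBound_nonneg {X Γ : Type*} [Group Γ] [MulAction Γ X] {nX : X → ℝ}
    (hX0 : ∀ x, 0 ≤ nX x) (p : ((X →₀ ℕ) × Γ) × ((X →₀ ℕ) × Γ)) : 0 ≤ stBound nX p := by
  refine add_nonneg (Finset.sum_nonneg fun x _ => mul_nonneg (Nat.cast_nonneg _) ?_)
    (Finset.sum_nonneg fun y _ => mul_nonneg (Nat.cast_nonneg _) ?_)
  · have := hX0 x; linarith
  · have := hX0 (p.2.2⁻¹ • y); linarith

/-- Bound on `symLen` on a set `sΓt`. -/
lemma symLen_le_of_mem_sGammaT {X Γ : Type*} [Group Γ] [MulAction Γ X] (nX : X → ℝ)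
    (hX0 : ∀ x, 0 ≤ nX x) (s t z : (X →₀ ℕ) × Γ) (hz : z ∈ sGammaT s t) :
    symLen nX z ≤ stBound nX (s, t) := by
  obtain ⟨g, rfl⟩ := hz
  classical
  set φ : X → X := fun y => (s.2 * g) • y with hφ
  have hφinj : Function.Injective φ := MulAction.injective _
  set b : X →₀ ℕ := Finsupp.mapDomain φ t.1 with hb
  have hsupp : (s.1 + b).support ⊆ s.1.support ∪ b.support := Finsupp.support_add
  rw [show symLen nX (s.1 + b, s.2 * g * t.2)
      = ∑ x ∈ s.1.support ∪ b.support, ((s.1 + b) x : ℝ) *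
        (1 + min (nX x) (nX ((s.2 * g * t.2)⁻¹ • x))) from
    symLen_eq_sum nX _ _ _ hsupp]
  have split : ∀ x ∈ s.1.support ∪ b.support,
      ((s.1 + b) x : ℝ) * (1 + min (nX x) (nX ((s.2 * g * t.2)⁻¹ • x)))
      = (s.1 x : ℝ) * (1 + min (nX x) (nX ((s.2 * g * t.2)⁻¹ • x)))
        + (b x : ℝ) * (1 + min (nX x) (nX ((s.2 * g * t.2)⁻¹ • x))) := by
    intro x _; push_cast [Finsupp.add_apply]; ring
  rw [Finset.sum_congr rfl split, Finset.sum_add_distrib]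
  have h1 : ∑ x ∈ s.1.support ∪ b.support,
      (s.1 x : ℝ) * (1 + min (nX x) (nX ((s.2 * g * t.2)⁻¹ • x)))
      ≤ ∑ x ∈ s.1.support, (s.1 x : ℝ) * (1 + nX x) := by
    rw [← Finset.sum_subset Finset.subset_union_left
      (f := fun x => (s.1 x : ℝ) * (1 + min (nX x) (nX ((s.2 * g * t.2)⁻¹ • x))))
      (by intro x _ hx; simp [Finsupp.notMem_support_iff.mp hx])]
    refine Finset.sum_le_sum fun x _ => ?_
    refine mul_le_mul_of_nonneg_left ?_ (Nat.cast_nonneg _)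
    have := min_le_left (nX x) (nX ((s.2 * g * t.2)⁻¹ • x)); linarith
  have h2 : ∑ x ∈ s.1.support ∪ b.support,
      (b x : ℝ) * (1 + min (nX x) (nX ((s.2 * g * t.2)⁻¹ • x)))
      ≤ ∑ y ∈ t.1.support, (t.1 y : ℝ) * (1 + nX (t.2⁻¹ • y)) := by
    rw [← Finset.sum_subset Finset.subset_union_right
      (f := fun x => (b x : ℝ) * (1 + min (nX x) (nX ((s.2 * g * t.2)⁻¹ • x))))
      (by intro x _ hx; simp [Finsupp.notMem_support_iff.mp hx])]
    have hbs : b.support = t.1.support.image φ := by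
      rw [hb, Finsupp.mapDomain_support_of_injective hφinj]
    rw [hbs, Finset.sum_image (fun a _ a' _ h => hφinj h)]
    refine Finset.sum_le_sum fun y _ => ?_
    have hbval : b (φ y) = t.1 y := Finsupp.mapDomain_apply hφinj _ _
    rw [hbval]
    refine mul_le_mul_of_nonneg_left ?_ (Nat.cast_nonneg _)
    have hact : (s.2 * g * t.2)⁻¹ • φ y = t.2⁻¹ • y := by
      rw [hφ]; simp only [smul_smul]; congr 1; group
    rw [hact]
    have := min_le_right (nX (φ y)) (nX (t.2⁻¹ • y)); linarith
  exact add_le_add h1 h2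

/-- A subset `A ⊆ 𝖸 ⋊ Γ` is contained in a finite union of sets `sΓt` iff
`sup_{z ∈ A} |z|_sym < ∞`. -/
theorem small_iff_symLen_bounded {X Γ : Type*} [Group Γ] [MulAction Γ X]
    (nX : X → ℝ) (nG : Γ → ℝ)
    (hX0 : ∀ x, 0 ≤ nX x) (hG0 : ∀ g, 0 ≤ nG g)
    (hcompat : ∀ (g : Γ) (x : X), nX (g • x) ≤ nG g + nX x)
    (hfin : ∀ R : ℝ, 0 < R → {x : X | nX x ≤ R}.Finite)
    (A : Set ((X →₀ ℕ) × Γ)) :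
    (∃ F : Finset (((X →₀ ℕ) × Γ) × ((X →₀ ℕ) × Γ)),
        A ⊆ ⋃ p ∈ F, sGammaT p.1 p.2) ↔
      ∃ M : ℝ, ∀ z ∈ A, symLen nX z ≤ M := by
  classical
  constructor
  · rintro ⟨F, hF⟩
    refine ⟨∑ p ∈ F, stBound nX p, fun z hz => ?_⟩
    obtain ⟨p, hp, hzp⟩ := Set.mem_iUnion₂.mp (hF hz)
    calc symLen nX z ≤ stBound nX p := symLen_le_of_mem_sGammaT nX hX0 _ _ _ hzp
    _ ≤ ∑ p ∈ F, stBound nX p :=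
        Finset.single_le_sum (fun q _ => stBound_nonneg hX0 q) hp
  · rintro ⟨M, hM⟩
    set M' : ℝ := max M 0 with hM'
    have hM'0 : 0 ≤ M' := le_max_right _ _
    have hMle : ∀ z ∈ A, symLen nX z ≤ M' := fun z hz => (hM z hz).trans (le_max_left _ _)
    have hpos : (0:ℝ) < M' + 1 := by linarith
    set B : Finset X := (hfin (M' + 1) hpos).toFinset with hB
    set N : ℕ := ⌈M'⌉₊ with hN
    set g0 : X →₀ ℕ := Finsupp.indicator B (fun _ _ => N) with hg0
    set C : Finset (X →₀ ℕ) := Finset.Iic g0 with hC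
    refine ⟨(C ×ˢ C).image (fun p => ((p.1, (1:Γ)), (p.2, (1:Γ)))), ?_⟩
    rintro ⟨a, g⟩ hz
    have key : ∀ x ∈ a.support, a x ≤ N ∧ min (nX x) (nX (g⁻¹ • x)) ≤ M' := by
      intro x hx
      have ht := (term_le_symLen hX0 (a, g) x hx).trans (hMle _ hz)
      have hmin : 0 ≤ min (nX x) (nX (g⁻¹ • x)) := le_min (hX0 x) (hX0 _)
      have hax : (1:ℝ) ≤ (a x : ℝ) := by
        exact_mod_cast Nat.one_le_iff_ne_zero.mpr (Finsupp.mem_support_iff.mp hx)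
      simp only at ht
      constructor
      · have h1 : (a x : ℝ) ≤ M' := by nlinarith
        have h2 : (a x : ℝ) ≤ (N : ℝ) := h1.trans (Nat.le_ceil M')
        exact_mod_cast h2
      · nlinarith
    set p : X → Prop := fun x => nX x ≤ M' with hp
    set s' : X →₀ ℕ := a.filter p with hs'
    set b : X →₀ ℕ := Finsupp.mapDomain (fun y => g⁻¹ • y) (a.filter fun x => ¬ p x) with hb
    have hginj : Function.Injective (fun y : X => g⁻¹ • y) := MulAction.injective _
    have hle : ∀ c : X →₀ ℕ, (∀ x ∈ c.support, c x ≤ N ∧ nX x ≤ M') → c ∈ C := by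
      intro c hc
      rw [hC, Finset.mem_Iic]
      intro x
      by_cases hx : x ∈ c.support
      · obtain ⟨h1, h2⟩ := hc x hx
        have hxB : x ∈ B := by
          rw [hB, Set.Finite.mem_toFinset]; exact le_trans h2 (by linarith)
        calc c x ≤ N := h1
        _ = g0 x := by rw [hg0]; exact (Finsupp.indicator_of_mem hxB (fun _ _ => N)).symm
      · simp [Finsupp.notMem_support_iff.mp hx]
    have hs'C : s' ∈ C := by
      refine hle s' fun x hx => ?_
      rw [hs', Finsupp.support_filter, Finset.mem_filter] at hx
      obtain ⟨hxa, hpx⟩ := hx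
      have : s' x = a x := Finsupp.filter_apply_pos p a hpx
      exact ⟨this ▸ (key x hxa).1, hpx⟩
    have hbC : b ∈ C := by
      refine hle b fun y hy => ?_
      rw [hb, Finsupp.mapDomain_support_of_injective hginj, Finset.mem_image] at hy
      obtain ⟨x, hx, rfl⟩ := hy
      rw [Finsupp.support_filter, Finset.mem_filter] at hx
      obtain ⟨hxa, hpx⟩ := hx
      have hval : b (g⁻¹ • x) = a x := by
        rw [hb, Finsupp.mapDomain_apply hginj]
        exact Finsupp.filter_apply_pos _ a hpx
      have hmin := (key x hxa).2
      have hnx : ¬ nX x ≤ M' := hpx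
      have : nX (g⁻¹ • x) ≤ M' := by
        rcases min_le_iff.mp hmin with h | h
        · exact absurd h hnx
        · exact h
      exact ⟨hval ▸ (key x hxa).1, this⟩
    refine Set.mem_iUnion₂.mpr ⟨((s', 1), (b, 1)), ?_, ?_⟩
    · exact Finset.mem_image.mpr ⟨(s', b), Finset.mem_product.mpr ⟨hs'C, hbC⟩, rfl⟩
    · refine ⟨g, ?_⟩
      have hmap : Finsupp.mapDomain (fun y : X => ((1:Γ) * g) • y) b
          = a.filter fun x => ¬ p x := by
        rw [hb, ← Finsupp.mapDomain_comp]
        have : ((fun y : X => ((1:Γ) * g) • y) ∘ fun y => g⁻¹ • y) = id := by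
          funext y; simp [smul_smul]
        rw [this, Finsupp.mapDomain_id]
      simp only [hmap]
      refine Prod.ext ?_ (by simp)
      simp only
      rw [hs', Finsupp.filter_pos_add_filter_neg]
end

section
/- For every z = (x, g) with x = (x₁,…,xₙ) a nonempty tuple and every h, k ∈ Γ: ‖h·ω(z) − ω(hz)‖₁ ≤ |z|₀·|h|_Γ and ‖ω(z) − ω(zk)‖₁ ≤ |z|₀·|k|_Γ, where hz := ((h·x₁,…,h·xₙ), hg) and zk := (x, gk). -/
/-- The ℓ¹-norm of a finitely supported real-valued function. -/
def l1Norm {X : Type*} (φ : X →₀ ℝ) : ℝ := ∑ x ∈ φ.support, |φ x|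

/-- `ω(z)` for `z = (x, g)` with `x = (x₁,…,xₘ)` a tuple in `X` and `g ∈ Γ`:
`ω(z) = Σᵢ (m + min{|xᵢ|_X, |g⁻¹·xᵢ|_X})·δ_{xᵢ}`. -/
noncomputable def omegaTuple {X Γ : Type*} [Group Γ] [MulAction Γ X] (nX : X → ℝ)
    {m : ℕ} (x : Fin m → X) (g : Γ) : X →₀ ℝ :=
  ∑ i, Finsupp.single (x i) ((m : ℝ) + min (nX (x i)) (nX (g⁻¹ • x i)))

lemma l1Norm_sum_single_le {X : Type*} {m : ℕ} (y : Fin m → X) [DecidableEq X]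
    (d : Fin m → ℝ) :
    l1Norm (∑ i, Finsupp.single (y i) (d i)) ≤ ∑ i, |d i| := by
  set φ : X →₀ ℝ := ∑ i, Finsupp.single (y i) (d i)
  have h1 : l1Norm φ ≤ ∑ a ∈ φ.support, ∑ i, |Finsupp.single (y i) (d i) a| := by
    refine Finset.sum_le_sum fun a _ => ?_
    have : φ a = ∑ i, Finsupp.single (y i) (d i) a := by
      simp [φ, Finsupp.finset_sum_apply]
    rw [this]
    exact Finset.abs_sum_le_sum_abs _ _
  rw [Finset.sum_comm] at h1
  refine h1.trans (Finset.sum_le_sum fun i _ => ?_)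
  have : ∀ a, |Finsupp.single (y i) (d i) a| = if y i = a then |d i| else 0 := by
    intro a; rw [Finsupp.single_apply]; split <;> simp
  simp_rw [this, Finset.sum_ite_eq φ.support (y i) (fun _ => |d i|)]
  split <;> simp [abs_nonneg]

lemma abs_nX_smul_sub {X Γ : Type*} [Group Γ] [MulAction Γ X]
    (nX : X → ℝ) (nG : Γ → ℝ)
    (hcompat : ∀ (g : Γ) (x : X), nX (g • x) ≤ nG g + nX x)
    (hsymm : ∀ g : Γ, nG g⁻¹ = nG g) (h : Γ) (x : X) :
    |nX (h • x) - nX x| ≤ nG h := by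
  rw [abs_sub_le_iff]
  constructor
  · linarith [hcompat h x]
  · have := hcompat h⁻¹ (h • x)
    rw [inv_smul_smul, hsymm] at this
    linarith

/-- `‖h·ω(z) − ω(hz)‖₁ ≤ |z|₀·|h|_Γ` and `‖ω(z) − ω(zk)‖₁ ≤ |z|₀·|k|_Γ`. -/
theorem omega_translation_estimates {X Γ : Type*} [Group Γ] [MulAction Γ X]
    (nX : X → ℝ) (nG : Γ → ℝ)
    (hX0 : ∀ x, 0 ≤ nX x) (hG0 : ∀ g, 0 ≤ nG g)
    (hcompat : ∀ (g : Γ) (x : X), nX (g • x) ≤ nG g + nX x)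
    (hsymm : ∀ g : Γ, nG g⁻¹ = nG g)
    (n : ℕ) (x : Fin (n + 1) → X) (g h k : Γ) :
    l1Norm (Finsupp.mapDomain (fun y => h • y) (omegaTuple nX x g) -
        omegaTuple nX (fun i => h • x i) (h * g)) ≤ ((n : ℝ) + 1) * nG h ∧
    l1Norm (omegaTuple nX x g - omegaTuple nX x (g * k)) ≤ ((n : ℝ) + 1) * nG k := by
  classical
  have card : ((n : ℝ) + 1) = ∑ _i : Fin (n + 1), (1 : ℝ) := by
    simp
  constructor
  · have hmap : Finsupp.mapDomain (fun y => h • y) (omegaTuple nX x g) =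
        ∑ i, Finsupp.single (h • x i)
          (((n + 1 : ℕ) : ℝ) + min (nX (x i)) (nX (g⁻¹ • x i))) := by
      rw [omegaTuple, Finsupp.mapDomain_finset_sum]
      exact Finset.sum_congr rfl fun i _ => Finsupp.mapDomain_single
    rw [hmap, omegaTuple, ← Finset.sum_sub_distrib]
    simp_rw [← Finsupp.single_sub]
    refine (l1Norm_sum_single_le _ _).trans ?_
    rw [card, Finset.sum_mul]
    refine Finset.sum_le_sum fun i _ => ?_
    rw [one_mul]
    have e1 : (h * g)⁻¹ • (h • x i) = g⁻¹ • x i := by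
      rw [mul_inv_rev, mul_smul, inv_smul_smul]
    rw [e1]
    have : ((n + 1 : ℕ) : ℝ) + min (nX (x i)) (nX (g⁻¹ • x i)) -
        (((n + 1 : ℕ) : ℝ) + min (nX (h • x i)) (nX (g⁻¹ • x i))) =
        min (nX (x i)) (nX (g⁻¹ • x i)) - min (nX (h • x i)) (nX (g⁻¹ • x i)) := by
      ring
    rw [this]
    refine (abs_min_sub_min_le_max _ _ _ _).trans (max_le ?_ (by simp [hG0 h]))
    rw [abs_sub_comm]
    exact abs_nX_smul_sub nX nG hcompat hsymm h (x i)
  · rw [omegaTuple, omegaTuple, ← Finset.sum_sub_distrib]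
    simp_rw [← Finsupp.single_sub]
    refine (l1Norm_sum_single_le _ _).trans ?_
    rw [card, Finset.sum_mul]
    refine Finset.sum_le_sum fun i _ => ?_
    rw [one_mul]
    have : ((n + 1 : ℕ) : ℝ) + min (nX (x i)) (nX (g⁻¹ • x i)) -
        (((n + 1 : ℕ) : ℝ) + min (nX (x i)) (nX ((g * k)⁻¹ • x i))) =
        min (nX (g⁻¹ • x i)) (nX (x i)) - min (nX ((g * k)⁻¹ • x i)) (nX (x i)) := by
      rw [min_comm (nX (x i)), min_comm (nX (x i))]; ring
    rw [this]
    refine (abs_min_sub_min_le_max _ _ _ _).trans (max_le ?_ (by simp [hG0 k]))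
    have e2 : (g * k)⁻¹ • x i = k⁻¹ • (g⁻¹ • x i) := by
      rw [mul_inv_rev, mul_smul]
    rw [e2, abs_sub_comm]
    have := abs_nX_smul_sub nX nG hcompat hsymm k⁻¹ (g⁻¹ • x i)
    rwa [hsymm] at this
end

section
/- For every z = (x, g) with x = (x₁,…,xₙ) a nonempty tuple and every h, k ∈ Γ: ‖h·μ(z) − μ(hzk)‖₁ ≤ 2(|h|_Γ + |k|_Γ)·|z|₀ / (|z|₀² + |z|₁), where hzk := ((h·x₁,…,h·xₙ), hgk). -/
/-- `μ(z) := ω(z)/‖ω(z)‖₁`. -/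
noncomputable def muTuple {X Γ : Type*} [Group Γ] [MulAction Γ X] (nX : X → ℝ)
    {m : ℕ} (x : Fin m → X) (g : Γ) : X →₀ ℝ :=
  (l1Norm (omegaTuple nX x g))⁻¹ • omegaTuple nX x g

lemma l1Norm_eq_sum_of_subset {X : Type*} (φ : X →₀ ℝ) {s : Finset X}
    (h : φ.support ⊆ s) : l1Norm φ = ∑ x ∈ s, |φ x| :=
  Finset.sum_subset h (fun x _ hx => by
    simp [Finsupp.notMem_support_iff.mp hx])

lemma l1Norm_add_le {X : Type*} (φ ψ : X →₀ ℝ) : l1Norm (φ + ψ) ≤ l1Norm φ + l1Norm ψ := by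
  classical
  rw [l1Norm_eq_sum_of_subset (φ + ψ) (s := φ.support ∪ ψ.support) Finsupp.support_add,
    l1Norm_eq_sum_of_subset φ Finset.subset_union_left,
    l1Norm_eq_sum_of_subset ψ Finset.subset_union_right, ← Finset.sum_add_distrib]
  exact Finset.sum_le_sum fun x _ => by simpa using abs_add_le (φ x) (ψ x)

lemma l1Norm_single {X : Type*} (a : X) (c : ℝ) : l1Norm (Finsupp.single a c) = |c| := by
  rcases eq_or_ne c 0 with rfl | hc
  · simp [l1Norm]
  · simp [l1Norm, Finsupp.support_single_ne_zero a hc]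

lemma l1Norm_sum_le {ι X : Type*} (s : Finset ι) (f : ι → X →₀ ℝ) :
    l1Norm (∑ i ∈ s, f i) ≤ ∑ i ∈ s, l1Norm (f i) := by
  classical
  induction s using Finset.cons_induction with
  | empty => simp [l1Norm]
  | cons i s hi ih =>
    rw [Finset.sum_cons, Finset.sum_cons]
    exact (l1Norm_add_le _ _).trans (by linarith)

lemma sum_le_l1Norm {X : Type*} (φ : X →₀ ℝ) : ∑ x ∈ φ.support, φ x ≤ l1Norm φ :=
  Finset.sum_le_sum fun x _ => le_abs_self _

lemma l1Norm_sum_single_eq {ι X : Type*} (s : Finset ι) (y : ι → X) (c : ι → ℝ)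
    (hc : ∀ i ∈ s, 0 ≤ c i) :
    l1Norm (∑ i ∈ s, Finsupp.single (y i) (c i)) = ∑ i ∈ s, c i := by
  classical
  have hT := map_sum (Finsupp.liftAddHom (α := X) (M := ℝ) (N := ℝ)
    (fun _ => AddMonoidHom.id ℝ)) (fun i => Finsupp.single (y i) (c i)) s
  simp only [Finsupp.liftAddHom_apply_single, AddMonoidHom.id_apply] at hT
  rw [Finsupp.liftAddHom_apply, Finsupp.sum] at hT
  simp only [AddMonoidHom.id_apply] at hT
  refine le_antisymm ?_ ?_
  · calc l1Norm (∑ i ∈ s, Finsupp.single (y i) (c i))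
        ≤ ∑ i ∈ s, l1Norm (Finsupp.single (y i) (c i)) := l1Norm_sum_le _ _
      _ = ∑ i ∈ s, c i := by
          refine Finset.sum_congr rfl fun i hi => ?_
          rw [l1Norm_single, abs_of_nonneg (hc i hi)]
  · rw [← hT]; exact sum_le_l1Norm _

/-- `‖h·μ(z) − μ(hzk)‖₁ ≤ 2(|h|_Γ + |k|_Γ)·|z|₀ / (|z|₀² + |z|₁)`. -/
theorem mu_translation_estimate {X Γ : Type*} [Group Γ] [MulAction Γ X]
    (nX : X → ℝ) (nG : Γ → ℝ)
    (hX0 : ∀ x, 0 ≤ nX x) (hG0 : ∀ g, 0 ≤ nG g)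
    (hcompat : ∀ (g : Γ) (x : X), nX (g • x) ≤ nG g + nX x)
    (hsymm : ∀ g : Γ, nG g⁻¹ = nG g)
    (n : ℕ) (x : Fin (n + 1) → X) (g h k : Γ) :
    l1Norm (Finsupp.mapDomain (fun y => h • y) (muTuple nX x g) -
        muTuple nX (fun i => h • x i) (h * g * k)) ≤
      2 * (nG h + nG k) * ((n : ℝ) + 1) /
        (((n : ℝ) + 1) ^ 2 + ∑ i, min (nX (x i)) (nX (g⁻¹ • x i))) := by
  classical
  set M : ℝ := (n : ℝ) + 1 with hM
  have hMpos : 0 < M := by positivity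
  set a : Fin (n + 1) → ℝ := fun i => M + min (nX (x i)) (nX (g⁻¹ • x i)) with ha_def
  set b : Fin (n + 1) → ℝ :=
    fun i => M + min (nX (h • x i)) (nX ((h * g * k)⁻¹ • (h • x i))) with hb_def
  have ha_pos : ∀ i, 0 < a i := fun i => by
    have := le_min (hX0 (x i)) (hX0 (g⁻¹ • x i)); positivity
  have hb_pos : ∀ i, 0 < b i := fun i => by
    have := le_min (hX0 (h • x i)) (hX0 ((h * g * k)⁻¹ • (h • x i))); positivity
  set A : ℝ := ∑ i, a i with hA_def
  set B : ℝ := ∑ i, b i with hB_def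
  have hApos : 0 < A := Finset.sum_pos (fun i _ => ha_pos i) Finset.univ_nonempty
  have hBpos : 0 < B := Finset.sum_pos (fun i _ => hb_pos i) Finset.univ_nonempty
  have hcast : ((n + 1 : ℕ) : ℝ) = M := by push_cast [hM]; ring
  have hω1 : omegaTuple nX x g = ∑ i, Finsupp.single (x i) (a i) := by
    unfold omegaTuple
    exact Finset.sum_congr rfl fun i _ => by rw [hcast]
  have hω2 : omegaTuple nX (fun i => h • x i) (h * g * k)
      = ∑ i, Finsupp.single (h • x i) (b i) := by
    unfold omegaTuple
    exact Finset.sum_congr rfl fun i _ => by rw [hcast]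
  have hAnorm : l1Norm (omegaTuple nX x g) = A := by
    rw [hω1, l1Norm_sum_single_eq _ _ _ (fun i _ => (ha_pos i).le)]
  have hBnorm : l1Norm (omegaTuple nX (fun i => h • x i) (h * g * k)) = B := by
    rw [hω2, l1Norm_sum_single_eq _ _ _ (fun i _ => (hb_pos i).le)]
  -- the difference as a sum of singles
  have hdiff : Finsupp.mapDomain (fun y => h • y) (muTuple nX x g) -
      muTuple nX (fun i => h • x i) (h * g * k)
      = ∑ i, Finsupp.single (h • x i) (A⁻¹ * a i - B⁻¹ * b i) := by
    unfold muTuple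
    rw [hAnorm, hBnorm, hω1, hω2, Finsupp.mapDomain_smul, Finsupp.mapDomain_finset_sum]
    simp only [Finsupp.mapDomain_single]
    rw [Finset.smul_sum, Finset.smul_sum, ← Finset.sum_sub_distrib]
    refine Finset.sum_congr rfl fun i _ => by
      rw [Finsupp.smul_single, Finsupp.smul_single, ← Finsupp.single_sub]
      simp [smul_eq_mul]
  rw [hdiff]
  -- Lipschitz estimate on coefficients
  set c : ℝ := nG h + nG k with hc_def
  have hc0 : 0 ≤ c := add_nonneg (hG0 h) (hG0 k)
  have hab : ∀ i, |a i - b i| ≤ c := by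
    intro i
    have hsm : (h * g * k)⁻¹ • (h • x i) = k⁻¹ • (g⁻¹ • x i) := by
      rw [smul_smul, smul_smul]
      congr 1
      group
    have h1 : |nX (x i) - nX (h • x i)| ≤ nG h := by
      rw [abs_sub_le_iff]
      constructor
      · have := hcompat h⁻¹ (h • x i)
        rw [inv_smul_smul, hsymm] at this
        linarith
      · have := hcompat h (x i); linarith
    have h2 : |nX (g⁻¹ • x i) - nX ((h * g * k)⁻¹ • (h • x i))| ≤ nG k := by
      rw [hsm, abs_sub_le_iff]
      constructor
      · have := hcompat k (k⁻¹ • g⁻¹ • x i)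
        rw [smul_inv_smul] at this
        linarith
      · have := hcompat k⁻¹ (g⁻¹ • x i)
        rw [hsymm] at this
        linarith
    have hmin : |a i - b i| = |min (nX (x i)) (nX (g⁻¹ • x i)) -
        min (nX (h • x i)) (nX ((h * g * k)⁻¹ • (h • x i)))| := by
      rw [ha_def, hb_def]; ring_nf
    rw [hmin]
    refine (abs_min_sub_min_le_max _ _ _ _).trans ?_
    exact max_le (h1.trans (by rw [hc_def]; linarith [hG0 k]))
      (h2.trans (by rw [hc_def]; linarith [hG0 h]))
  have hBA : |B - A| ≤ M * c := by
    rw [hA_def, hB_def, ← Finset.sum_sub_distrib]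
    refine (Finset.abs_sum_le_sum_abs _ _).trans ?_
    calc ∑ i, |b i - a i| ≤ ∑ _i : Fin (n+1), c := by
          refine Finset.sum_le_sum fun i _ => ?_
          rw [abs_sub_comm]; exact hab i
      _ = M * c := by simp [hM, mul_comm]
  -- triangle inequality
  refine (l1Norm_sum_le _ _).trans ?_
  have hterm : ∀ i, l1Norm (Finsupp.single (h • x i) (A⁻¹ * a i - B⁻¹ * b i))
      ≤ c / A + b i * |B - A| / (A * B) := by
    intro i
    rw [l1Norm_single]
    have heq : A⁻¹ * a i - B⁻¹ * b i = (a i - b i) / A + b i * (B - A) / (A * B) := by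
      field_simp
      ring
    rw [heq]
    refine (abs_add_le _ _).trans (add_le_add ?_ ?_)
    · rw [abs_div, abs_of_pos hApos]
      gcongr
      exact hab i
    · rw [abs_div, abs_mul, abs_of_pos (mul_pos hApos hBpos), abs_of_pos (hb_pos i)]
  refine (Finset.sum_le_sum fun i _ => hterm i).trans ?_
  have hsum : ∑ i, (c / A + b i * |B - A| / (A * B))
      = M * (c / A) + B * |B - A| / (A * B) := by
    rw [Finset.sum_add_distrib, Finset.sum_const, Finset.card_univ, Fintype.card_fin,
      nsmul_eq_mul, hcast, ← Finset.sum_div, ← Finset.sum_mul, ← hB_def]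
  rw [hsum]
  have h2 : B * |B - A| / (A * B) = |B - A| / A := by
    field_simp
  rw [h2]
  have hA_eq : A = M ^ 2 + ∑ i, min (nX (x i)) (nX (g⁻¹ • x i)) := by
    rw [hA_def, ha_def]
    rw [Finset.sum_add_distrib, Finset.sum_const, Finset.card_univ, Fintype.card_fin,
      nsmul_eq_mul, hcast, sq]
  have goal_eq : 2 * (nG h + nG k) * ((n : ℝ) + 1) /
        (((n : ℝ) + 1) ^ 2 + ∑ i, min (nX (x i)) (nX (g⁻¹ • x i))) = 2 * c * M / A := by
    rw [hA_eq, hc_def, hM]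
  rw [goal_eq]
  have : M * (c / A) + |B - A| / A ≤ M * (c / A) + M * c / A := by
    gcongr
  exact this.trans (le_of_eq (by ring))
end

section
/- Assume moreover that {i ∈ ℐ : |i|_ℐ ≤ R} is finite for every R > 0, and write B_R(ℐ) := {i ∈ ℐ : |i|_ℐ ≤ R}. Then for every (y, g) ∈ Δ_ℐ^free × Γ and every C > 0: if |(y, g)|_free ≤ C·|supp(y)|, then |(y, g)|_free ≤ 4C·|B_{2C}(ℐ)|, where |supp(y)| and |B_{2C}(ℐ)| denote cardinalities. -/
noncomputable section

variable {ι Δ Γ : Type*} [Group Δ] [Group Γ] [MulAction Γ ι]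
  [DecidableEq ι] [DecidableEq Δ]

/-- The action of `Γ` on the free product `∗_{i∈ι} Δ` permuting the factors. -/
def permHom (g : Γ) :
    Monoid.CoprodI (fun _ : ι => Δ) →* Monoid.CoprodI (fun _ : ι => Δ) :=
  Monoid.CoprodI.lift fun i => Monoid.CoprodI.of (M := fun _ : ι => Δ) (i := g • i)

/-- The reduced word of an element of the free product, as a list of letters. -/
def wordList (y : Monoid.CoprodI (fun _ : ι => Δ)) : List (Σ _ : ι, Δ) :=
  (Monoid.CoprodI.Word.equiv y).toList

/-- The support `supp(y) ⊆ ι` of an element of the free product. -/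
def freeSupp (y : Monoid.CoprodI (fun _ : ι => Δ)) : Finset ι :=
  ((wordList y).map Sigma.fst).toFinset

/-- `a(y) := Σₖ |y_{iₖ}|_Δ·δ_{iₖ}`. -/
def aFn (nD : Δ → ℝ) (y : Monoid.CoprodI (fun _ : ι => Δ)) : ι →₀ ℝ :=
  ((wordList y).map fun p => Finsupp.single p.1 (nD p.2)).sum

/-- `m(y, g) := Σ_{i ∈ supp(y)} min{|i|_ι, |g⁻¹·i|_ι}·δ_i`. -/
def mFn (nI : ι → ℝ) (y : Monoid.CoprodI (fun _ : ι => Δ)) (g : Γ) : ι →₀ ℝ :=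
  ∑ i ∈ freeSupp y, Finsupp.single i (min (nI i) (nI (g⁻¹ • i)))

/-- `ω(y, g) := m(y, g) + a(y)`. -/
def omegaFree (nI : ι → ℝ) (nD : Δ → ℝ)
    (y : Monoid.CoprodI (fun _ : ι => Δ)) (g : Γ) : ι →₀ ℝ :=
  mFn nI y g + aFn nD y


/-- `|(y, g)|_free := ‖ω(y, g)‖₁`. -/
def freeLen (nI : ι → ℝ) (nD : Δ → ℝ)
    (y : Monoid.CoprodI (fun _ : ι => Δ)) (g : Γ) : ℝ :=
  l1Norm (omegaFree nI nD y g)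

/-!
Call `i ∈ supp(y)` far if `min{|i|, |g⁻¹·i|} > 2C`. At a far `i` the coordinate of `ω(y, g)` is
at least `m(y, g)(i) > 2C`, because `a(y) ≥ 0`; so `2C · #far ≤ |(y, g)|_free ≤ C · |supp(y)|`
and at most half of `supp(y)` is far. The other half lies in `B_{2C} ∪ g·B_{2C}`, whence
`|supp(y)| ≤ 4 |B_{2C}|` and `|(y, g)|_free ≤ C |supp(y)| ≤ 4C |B_{2C}|`.
-/

open Finset
open scoped Pointwise

theorem sum_abs_le_l1Norm {X : Type*} (φ : X →₀ ℝ) (s : Finset X) :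
    ∑ x ∈ s, |φ x| ≤ l1Norm φ := by
  classical
  calc ∑ x ∈ s, |φ x| ≤ ∑ x ∈ s ∪ φ.support, |φ x| :=
        sum_le_sum_of_subset_of_nonneg subset_union_left fun _ _ _ => abs_nonneg _
    _ = l1Norm φ :=
        (Finsupp.sum_of_support_subset φ subset_union_right (fun _ v => |v|)
          fun _ _ => abs_zero).symm

theorem mFn_apply_of_mem (nI : ι → ℝ) {y : Monoid.CoprodI (fun _ : ι => Δ)} (g : Γ) {i : ι}
    (hi : i ∈ freeSupp y) : mFn nI y g i = min (nI i) (nI (g⁻¹ • i)) := by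
  simp [mFn, Finset.sum_apply', Finsupp.single_apply, hi]

theorem aFn_nonneg {nD : Δ → ℝ} (hD : ∀ d : Δ, d ≠ 1 → 0 ≤ nD d)
    (y : Monoid.CoprodI (fun _ : ι => Δ)) (i : ι) : 0 ≤ aFn nD y i := by
  suffices h : 0 ≤ aFn nD y from h i
  refine List.sum_nonneg fun φ hφ => ?_
  obtain ⟨p, hp, rfl⟩ := List.mem_map.mp hφ
  exact Finsupp.single_nonneg.mpr (hD _ ((Monoid.CoprodI.Word.equiv y).ne_one p hp))

theorem mul_card_filter_lt_le_freeLen (nI : ι → ℝ) {nD : Δ → ℝ}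
    (hD : ∀ d : Δ, d ≠ 1 → 0 ≤ nD d) (y : Monoid.CoprodI (fun _ : ι => Δ)) (g : Γ) (R : ℝ) :
    R * #{i ∈ freeSupp y | R < min (nI i) (nI (g⁻¹ • i))} ≤ freeLen nI nD y g := by
  set T := {i ∈ freeSupp y | R < min (nI i) (nI (g⁻¹ • i))}
  have hω : ∀ i ∈ T, R ≤ |omegaFree nI nD y g i| := fun i hi => by
    obtain ⟨hi, hR⟩ := mem_filter.mp hi
    rw [omegaFree, Finsupp.add_apply, mFn_apply_of_mem nI g hi]
    exact le_abs.mpr (.inl (by linarith [aFn_nonneg hD y i]))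
  calc R * #T = ∑ _i ∈ T, R := by rw [sum_const, nsmul_eq_mul, mul_comm]
    _ ≤ ∑ i ∈ T, |omegaFree nI nD y g i| := sum_le_sum hω
    _ ≤ freeLen nI nD y g := sum_abs_le_l1Norm _ _

omit [DecidableEq ι] in
theorem card_filter_min_le_le_two_mul_ncard {nI : ι → ℝ} {R : ℝ}
    (hR : {i : ι | nI i ≤ R}.Finite) (s : Finset ι) (g : Γ) :
    #{i ∈ s | min (nI i) (nI (g⁻¹ • i)) ≤ R} ≤ 2 * {i : ι | nI i ≤ R}.ncard := by
  set B := {i : ι | nI i ≤ R}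
  have hsub : (↑{i ∈ s | min (nI i) (nI (g⁻¹ • i)) ≤ R} : Set ι) ⊆ B ∪ g • B := by
    intro i hi
    rcases min_le_iff.mp (mem_filter.mp hi).2 with h | h
    · exact .inl h
    · exact .inr (Set.mem_smul_set_iff_inv_smul_mem.mpr h)
  calc #{i ∈ s | min (nI i) (nI (g⁻¹ • i)) ≤ R}
      = (↑{i ∈ s | min (nI i) (nI (g⁻¹ • i)) ≤ R} : Set ι).ncard := (Set.ncard_coe_finset _).symm
    _ ≤ (B ∪ g • B).ncard := Set.ncard_le_ncard hsub (hR.union hR.smul_set)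
    _ ≤ B.ncard + (g • B).ncard := Set.ncard_union_le _ _
    _ = 2 * B.ncard := by rw [Set.ncard_smul_set, two_mul]

theorem freeLen_le_of_le_card_supp_general (nI : ι → ℝ) (nD : Δ → ℝ)
    (hD1 : ∀ d : Δ, d ≠ 1 → 1 ≤ nD d)
    (hfin : ∀ R : ℝ, 0 < R → {i : ι | nI i ≤ R}.Finite)
    (y : Monoid.CoprodI (fun _ : ι => Δ)) (g : Γ) (C : ℝ) (hC : 0 < C)
    (hle : freeLen nI nD y g ≤ C * (freeSupp y).card) :
    freeLen nI nD y g ≤ 4 * C * (Nat.card ↥{i : ι | nI i ≤ 2 * C}) := by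
  set N := #(freeSupp y)
  set near := #{i ∈ freeSupp y | min (nI i) (nI (g⁻¹ • i)) ≤ 2 * C}
  set far := #{i ∈ freeSupp y | 2 * C < min (nI i) (nI (g⁻¹ • i))}
  have hfar : 2 * C * far ≤ freeLen nI nD y g :=
    mul_card_filter_lt_le_freeLen nI (fun d hd => zero_le_one.trans (hD1 d hd)) y g _
  have hnear : near ≤ 2 * {i : ι | nI i ≤ 2 * C}.ncard :=
    card_filter_min_le_le_two_mul_ncard (hfin _ (by positivity)) _ g
  have hsplit : near + far = N := by
    simpa only [not_le] using card_filter_add_card_filter_not (s := freeSupp y)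
      (fun i => min (nI i) (nI (g⁻¹ • i)) ≤ 2 * C)
  have hfar_half : 2 * (far : ℝ) ≤ N := le_of_mul_le_mul_left (by linarith) hC
  have hN : (N : ℝ) ≤ 4 * {i : ι | nI i ≤ 2 * C}.ncard := by
    have : (near : ℝ) + far = N := by exact_mod_cast hsplit
    have : (near : ℝ) ≤ 2 * {i : ι | nI i ≤ 2 * C}.ncard := by exact_mod_cast hnear
    linarith
  rw [Nat.card_coe_set_eq]
  calc freeLen nI nD y g ≤ C * N := hle
    _ ≤ C * (4 * {i : ι | nI i ≤ 2 * C}.ncard) := by gcongr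
    _ = _ := by ring

/-- If `|(y, g)|_free ≤ C·|supp(y)|` then `|(y, g)|_free ≤ 4C·|B_{2C}(ι)|`, where
`B_R(ι) = {i : |i|_ι ≤ R}` is finite. -/
theorem freeLen_le_of_le_card_supp (nI : ι → ℝ) (nG : Γ → ℝ) (nD : Δ → ℝ)
    (hI0 : ∀ i, 0 ≤ nI i) (hG0 : ∀ g, 0 ≤ nG g)
    (hcompat : ∀ (g : Γ) (i : ι), nI (g • i) ≤ nG g + nI i)
    (hsymm : ∀ g : Γ, nG g⁻¹ = nG g)
    (hDe : nD 1 = 0) (hD1 : ∀ d : Δ, d ≠ 1 → 1 ≤ nD d)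
    (hfin : ∀ R : ℝ, 0 < R → {i : ι | nI i ≤ R}.Finite)
    (y : Monoid.CoprodI (fun _ : ι => Δ)) (g : Γ) (C : ℝ) (hC : 0 < C)
    (hle : freeLen nI nD y g ≤ C * (freeSupp y).card) :
    freeLen nI nD y g ≤ 4 * C * (Nat.card ↥{i : ι | nI i ≤ 2 * C}) :=
  freeLen_le_of_le_card_supp_general nI nD hD1 hfin y g C hC hle
end
end
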